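/- In a cartesian differential category, for any f : A → B and m, n ≥ 0, the m-th derivative of the n-th derivative satisfies (f^{(n)})^{(m)}(x⃗) = Σ_{θ : [m] ≃ [n]} f^{(|θ|)}(x_{θ₍₁₎ θ₍₂₎}), where the sum ranges over partial isomorphisms θ between subsets of [m] and [n], |θ| = m + n − |dom θ|, and x_{θ₍₁₎ θ₍₂₎} is the list x₀₀, followed by x_{i θ(i)} for i in the domain of θ, then x_{i'0} for i' in [m] minus the domain, then x_{0 j'} for j' in [n] minus the image. -/

import Mathlib

universe u

open Finset

/-- Unordered partitions of `Fin n` into nonempty parts, as a `Finset`. -/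
def partitions (n : ℕ) : Finset (Finset (Finset (Fin n))) :=
  Finset.univ.filter fun P =>
    (∅ ∉ P) ∧ ∀ i : Fin n, (P.filter fun s => i ∈ s).card = 1

/-- Partial injections from `Fin m` to `Fin n` (partial isomorphisms `[m] ≃ [n]`). -/
def partialInjs (m n : ℕ) : Finset (Fin m → Option (Fin n)) :=
  Finset.univ.filter fun θ =>
    ∀ i j : Fin m, ∀ a : Fin n, θ i = some a → θ j = some a → i = j

/-- The arrangement (Notation 5) associated to a partial isomorphism `θ : [m] ≃ [n]`:
the tail of the list `x_{θ₍₁₎θ₍₂₎}`, i.e. everything after the leading entry `(0,0)`: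
matched pairs `(i, θ i)`, then unmatched rows `(i, 0)`, then unmatched columns `(0, j)`. -/
def arrangeTail (m n : ℕ) (θ : Fin m → Option (Fin n)) :
    List (Fin (m + 1) × Fin (n + 1)) :=
  ((List.finRange m).filterMap fun i => (θ i).map fun j => (i.succ, j.succ))
    ++ ((List.finRange m).filterMap fun i =>
          if θ i = none then some (i.succ, (0 : Fin (n + 1))) else none)
    ++ ((List.finRange n).filterMap fun j =>
          if ∀ i, θ i ≠ some j then some ((0 : Fin (m + 1)), j.succ) else none)

variable (k : Type u) [CommSemiring k]

/-- The data of a cartesian left-`k`-linear category. -/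
structure CDCData where
  Obj : Type u
  Hom : Obj → Obj → Type u
  homAdd : ∀ A B, AddCommMonoid (Hom A B)
  homMod : ∀ A B, @Module k (Hom A B) inferInstance (homAdd A B)
  id : ∀ A, Hom A A
  comp : ∀ {A B C}, Hom B C → Hom A B → Hom A C
  term : Obj
  toTerm : ∀ A, Hom A term
  prod : Obj → Obj → Obj
  fst : ∀ {A B}, Hom (prod A B) A
  snd : ∀ {A B}, Hom (prod A B) B
  pair : ∀ {Z A B}, Hom Z A → Hom Z B → Hom Z (prod A B)

variable {k}

instance (C : CDCData k) (A B : C.Obj) : AddCommMonoid (C.Hom A B) := C.homAdd A B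
instance (C : CDCData k) (A B : C.Obj) : Module k (C.Hom A B) := C.homMod A B

namespace CDCData

/-- `dom A n` is the `(n+1)`-fold product `A × Aⁿ`, nested on the left. -/
def dom (C : CDCData k) (A : C.Obj) : ℕ → C.Obj
  | 0 => A
  | n + 1 => C.prod (dom C A n) A

/-- Tupling of `n+1` generalized elements of `A` into `A × Aⁿ`. -/
def tupleD (C : CDCData k) {Z A : C.Obj} :
    (n : ℕ) → (Fin (n + 1) → C.Hom Z A) → C.Hom Z (C.dom A n)
  | 0, x => x 0
  | n + 1, x => C.pair (tupleD C n fun i => x i.castSucc) (x (Fin.last (n + 1)))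

/-- Tupling of a head together with a list; the head of the list lands in the
*last* slot. -/
def tupList (C : CDCData k) {Z A : C.Obj} (x0 : C.Hom Z A) :
    (L : List (C.Hom Z A)) → C.Hom Z (C.dom A L.length)
  | [] => x0
  | a :: L => C.pair (tupList C x0 L) a

/-- Zero-padding `v` into the first slot of `A × Aⁿ`. -/
def zpad (C : CDCData k) {Z A : C.Obj} : (n : ℕ) → C.Hom Z A → C.Hom Z (C.dom A n)
  | 0, v => v
  | n + 1, v => C.pair (zpad C n v) 0

/-- The `i`-th projection `A × Aⁿ → A`. -/
def projD (C : CDCData k) {A : C.Obj} : (n : ℕ) → Fin (n + 1) → C.Hom (C.dom A n) A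
  | 0, _ => C.id A
  | n + 1, i => Fin.lastCases C.snd (fun j => C.comp (projD C n j) C.fst) i

/-- The `2ⁿ`-fold product of `A`. -/
def twoPow (C : CDCData k) (A : C.Obj) : ℕ → C.Obj
  | 0 => A
  | n + 1 => C.prod (twoPow C A n) (twoPow C A n)

/-- Tupling of a family indexed by `Fin n → Bool` (characteristic functions of
subsets of `[n]`) into `A^(2ⁿ)`; the last bit is the outermost product factor. -/
def cube (C : CDCData k) {Z A : C.Obj} :
    (n : ℕ) → ((Fin n → Bool) → C.Hom Z A) → C.Hom Z (C.twoPow A n)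
  | 0, x => x fun i => i.elim0
  | n + 1, x =>
      C.pair (cube C n fun b => x (Fin.snoc b false))
        (cube C n fun b => x (Fin.snoc b true))

/-- The subset of `Fin n` with characteristic function `b`. -/
def bset {n : ℕ} (b : Fin n → Bool) : Finset (Fin n) :=
  Finset.univ.filter fun i => b i = true

end CDCData

variable (k)

/-- A (`k`-linear) cartesian differential category, presented via generalized
elements. -/
structure CDC extends CDCData k where
  id_comp : ∀ {A B} (f : Hom A B), comp (id B) f = f
  comp_id : ∀ {A B} (f : Hom A B), comp f (id A) = f
  comp_assoc : ∀ {A B C D} (h : Hom C D) (g : Hom B C) (f : Hom A B),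
    comp (comp h g) f = comp h (comp g f)
  -- left `k`-linearity: precomposition is `k`-linear
  add_comp : ∀ {A B C} (g h : Hom B C) (f : Hom A B),
    comp (g + h) f = comp g f + comp h f
  smul_comp : ∀ {A B C} (r : k) (g : Hom B C) (f : Hom A B),
    comp (r • g) f = r • comp g f
  zero_comp : ∀ {A B C} (f : Hom A B), comp (0 : Hom B C) f = (0 : Hom A C)
  -- cartesian structure
  toTerm_unique : ∀ {A} (f : Hom A term), f = toTerm A
  fst_pair : ∀ {Z A B} (f : Hom Z A) (g : Hom Z B), comp fst (pair f g) = f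
  snd_pair : ∀ {Z A B} (f : Hom Z A) (g : Hom Z B), comp snd (pair f g) = g
  pair_unique : ∀ {Z A B} (h : Hom Z (prod A B)), pair (comp fst h) (comp snd h) = h
  -- the projections are `k`-linear
  fst_comp_add : ∀ {Z A B} (x y : Hom Z (prod A B)),
    comp fst (x + y) = comp fst x + comp fst y
  fst_comp_smul : ∀ {Z A B} (r : k) (x : Hom Z (prod A B)),
    comp fst (r • x) = r • comp fst x
  snd_comp_add : ∀ {Z A B} (x y : Hom Z (prod A B)),
    comp snd (x + y) = comp snd x + comp snd y
  snd_comp_smul : ∀ {Z A B} (r : k) (x : Hom Z (prod A B)),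
    comp snd (r • x) = r • comp snd x
  -- the differential operator
  D : ∀ {A B}, Hom A B → Hom (prod A A) B
  -- (i) D is k-linear
  D_add : ∀ {A B} (f g : Hom A B), D (f + g) = D f + D g
  D_smul : ∀ {A B} (r : k) (f : Hom A B), D (r • f) = r • D f
  -- (ii) D f is k-linear in its second argument
  D_arg_add : ∀ {Z A B} (f : Hom A B) (x u v : Hom Z A),
    comp (D f) (pair x (u + v)) = comp (D f) (pair x u) + comp (D f) (pair x v)
  D_arg_smul : ∀ {Z A B} (f : Hom A B) (r : k) (x u : Hom Z A),
    comp (D f) (pair x (r • u)) = r • comp (D f) (pair x u)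
  -- (iii) D of projections
  D_fst : ∀ {A B}, D (fst (A := A) (B := B)) = comp fst snd
  D_snd : ∀ {A B}, D (snd (A := A) (B := B)) = comp snd snd
  -- (iv) D of identities
  D_id : ∀ {A}, D (id A) = snd
  -- (v) the chain rule
  D_comp : ∀ {A B C} (g : Hom B C) (f : Hom A B),
    D (comp g f) = comp (D g) (pair (comp f fst) (D f))
  -- (vi) D f is D-linear in its first argument
  D_lin : ∀ {Z A B} (f : Hom A B) (x r v : Hom Z A),
    comp (D (D f)) (pair (pair x r) (pair 0 v)) = comp (D f) (pair x v)
  -- (vii) symmetry of the second derivative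
  D_sym : ∀ {Z A B} (f : Hom A B) (x r s : Hom Z A),
    comp (D (D f)) (pair (pair x r) (pair s 0)) =
      comp (D (D f)) (pair (pair x s) (pair r 0))

variable {k}

namespace CDC

/-- The `n`-th derivative `f⁽ⁿ⁾ = (D₁)ⁿ f : A × Aⁿ → B`. -/
def fDeriv (C : CDC k) {A B : C.Obj} (f : C.Hom A B) :
    (n : ℕ) → C.Hom (C.toCDCData.dom A n) B
  | 0 => f
  | n + 1 =>
      C.comp (C.D (fDeriv C f n)) (C.pair C.fst (C.toCDCData.zpad n C.snd))

/-- The iterated differential `Dⁿ f : A^(2ⁿ) → B`. -/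
def iterD (C : CDC k) {A B : C.Obj} (f : C.Hom A B) :
    (n : ℕ) → C.Hom (C.toCDCData.twoPow A n) B
  | 0 => f
  | n + 1 => C.D (iterD C f n)

/-- `f^{(I)}` for `I ⊆ [n]` (Definition 13). -/
def fIdx (C : CDC k) {A B : C.Obj} (f : C.Hom A B) (n : ℕ) (I : Finset (Fin n)) :
    C.Hom (C.toCDCData.dom A n) B :=
  C.comp (fDeriv C f I.card)
    (C.toCDCData.tupleD I.card
      (Fin.cases (C.toCDCData.projD n 0)
        fun j => C.toCDCData.projD n (Fin.succ ((I.orderIsoOfFin rfl j : Fin n)))))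

end CDC

/-!
Induction on `m`. For `F = f⁽ⁿ⁾` one has `F⁽ᵐ⁺¹⁾(P, a) = D(F⁽ᵐ⁾)(P, (a, 0, …, 0))`, and the
induction hypothesis, read at the generic point, writes `F⁽ᵐ⁾` as a sum over `θ` of `f⁽ᵏ⁾`
precomposed with linear maps. The derivative of `f⁽ᵏ⁾` is one new derivative slot plus, since
`f⁽ᵏ⁾` is linear in its derivative slots, one replacement term per old slot (`D_fDeriv`). The new
direction is `x_{m+1,·}` placed in row `0`, zero in the other rows: so the new slot gives the term
for `θ` with `m + 1` unmatched, replacing the slot of a column `j` unmatched by `θ` gives the term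
for `θ` extended by `m + 1 ↦ j`, and every other replacement vanishes. As `f⁽ᵏ⁾` is symmetric in
its derivative slots, the order of the arguments never matters.
-/

attribute [reducible] CDCData.dom

namespace CDC

variable {C : CDC k}

section Cartesian

variable {Z W A B : C.Obj}

lemma pair_comp (a : C.Hom Z A) (b : C.Hom Z B) (h : C.Hom W Z) :
    C.comp (C.pair a b) h = C.pair (C.comp a h) (C.comp b h) := by
  rw [← C.pair_unique (C.comp (C.pair a b) h), ← C.comp_assoc, C.fst_pair, ← C.comp_assoc,
    C.snd_pair]

lemma pair_fst_snd : C.pair C.fst C.snd = C.id (C.prod A B) := by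
  rw [← C.pair_unique (C.id (C.prod A B)), C.comp_id, C.comp_id]

lemma pair_add (a c : C.Hom Z A) (b d : C.Hom Z B) :
    C.pair (a + c) (b + d) = C.pair a b + C.pair c d := by
  rw [← C.pair_unique (C.pair a b + C.pair c d), C.fst_comp_add, C.snd_comp_add, C.fst_pair,
    C.fst_pair, C.snd_pair, C.snd_pair]

lemma fst_comp_zero : C.comp C.fst (0 : C.Hom Z (C.prod A B)) = 0 := by
  simpa using C.fst_comp_smul (0 : k) (0 : C.Hom Z (C.prod A B))

lemma snd_comp_zero : C.comp C.snd (0 : C.Hom Z (C.prod A B)) = 0 := by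
  simpa using C.snd_comp_smul (0 : k) (0 : C.Hom Z (C.prod A B))

lemma pair_zero : C.pair (0 : C.Hom Z A) (0 : C.Hom Z B) = 0 := by
  rw [← C.pair_unique (0 : C.Hom Z (C.prod A B)), fst_comp_zero, snd_comp_zero]

lemma pair_ext {X Y : C.Obj} {g h : C.Hom (C.prod X Y) B}
    (H : ∀ {Z : C.Obj} (P : C.Hom Z X) (Q : C.Hom Z Y),
      C.comp g (C.pair P Q) = C.comp h (C.pair P Q)) : g = h := by
  simpa only [pair_fst_snd, C.comp_id] using H C.fst C.snd

lemma pair_pair_ext {X Y X' Y' : C.Obj} {g h : C.Hom (C.prod (C.prod X Y) (C.prod X' Y')) B}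
    (H : ∀ {Z : C.Obj} (t : C.Hom Z X) (a : C.Hom Z Y) (d : C.Hom Z X') (b : C.Hom Z Y'),
      C.comp g (C.pair (C.pair t a) (C.pair d b)) = C.comp h (C.pair (C.pair t a) (C.pair d b))) :
    g = h :=
  pair_ext fun P Q => by rw [← C.pair_unique P, ← C.pair_unique Q]; exact H _ _ _ _

lemma sum_comp {ι : Type*} (s : Finset ι) (g : ι → C.Hom A B) (h : C.Hom Z A) :
    C.comp (∑ i ∈ s, g i) h = ∑ i ∈ s, C.comp (g i) h :=
  map_sum (⟨⟨fun g => C.comp g h, C.zero_comp h⟩, fun g g' => C.add_comp g g' h⟩ :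
    C.Hom A B →+ C.Hom Z B) g s

end Cartesian

section Differential

variable {Z A B : C.Obj}

lemma D_zero : C.D (0 : C.Hom A B) = 0 := by
  simpa using C.D_smul (0 : k) (0 : C.Hom A B)

lemma D_sum {ι : Type*} (s : Finset ι) (g : ι → C.Hom A B) :
    C.D (∑ i ∈ s, g i) = ∑ i ∈ s, C.D (g i) :=
  map_sum (⟨⟨C.D, D_zero⟩, C.D_add⟩ : C.Hom A B →+ C.Hom (C.prod A A) B) g s

lemma D_comp_pair_zero (h : C.Hom A B) (t : C.Hom Z A) : C.comp (C.D h) (C.pair t 0) = 0 := by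
  simpa using C.D_arg_smul h (0 : k) t 0

lemma D_pair (u : C.Hom Z A) (v : C.Hom Z B) : C.D (C.pair u v) = C.pair (C.D u) (C.D v) := by
  have hu : C.D u = C.comp C.fst (C.D (C.pair u v)) := by
    conv_lhs => rw [← C.fst_pair u v]
    rw [C.D_comp, C.D_fst, C.comp_assoc, C.snd_pair]
  have hv : C.D v = C.comp C.snd (C.D (C.pair u v)) := by
    conv_lhs => rw [← C.snd_pair u v]
    rw [C.D_comp, C.D_snd, C.comp_assoc, C.snd_pair]
  rw [hu, hv, C.pair_unique]

def IsLinear (h : C.Hom A B) : Prop := C.D h = C.comp h C.snd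

lemma isLinear_id : IsLinear (C.id A) := by
  rw [IsLinear, C.D_id, C.id_comp]

lemma isLinear_fst : IsLinear (C.fst (A := A) (B := B)) := C.D_fst

lemma isLinear_snd : IsLinear (C.snd (A := A) (B := B)) := C.D_snd

lemma isLinear_zero : IsLinear (0 : C.Hom A B) := by
  rw [IsLinear, D_zero, C.zero_comp]

lemma IsLinear.comp {W : C.Obj} {g : C.Hom A B} {h : C.Hom W A} (hg : IsLinear g)
    (hh : IsLinear h) : IsLinear (C.comp g h) := by
  rw [IsLinear, C.D_comp, hg, hh, C.comp_assoc, C.snd_pair, ← C.comp_assoc]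

lemma IsLinear.pair {u : C.Hom Z A} {v : C.Hom Z B} (hu : IsLinear u) (hv : IsLinear v) :
    IsLinear (C.pair u v) := by
  rw [IsLinear, D_pair, hu, hv, pair_comp]

lemma D_comp_apply_of_isLinear {W : C.Obj} (g : C.Hom A B) {h : C.Hom W A} (hh : IsLinear h)
    (P Q : C.Hom Z W) :
    C.comp (C.D (C.comp g h)) (C.pair P Q) =
      C.comp (C.D g) (C.pair (C.comp h P) (C.comp h Q)) := by
  rw [C.D_comp, hh, C.comp_assoc, pair_comp, C.comp_assoc, C.comp_assoc, C.fst_pair, C.snd_pair]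

end Differential

section Tuples

variable {Z W A : C.Obj}

lemma zpad_comp (n : ℕ) (a : C.Hom Z A) (h : C.Hom W Z) :
    C.comp (C.zpad n a) h = C.zpad n (C.comp a h) := by
  induction n with
  | zero => rfl
  | succ n ih => rw [CDCData.zpad, CDCData.zpad, pair_comp, ih, C.zero_comp]

lemma zpad_zero (n : ℕ) : C.zpad n (0 : C.Hom Z A) = 0 := by
  induction n with
  | zero => rfl
  | succ n ih => rw [CDCData.zpad, ih, pair_zero]

lemma IsLinear.zpad {a : C.Hom Z A} (ha : IsLinear a) (n : ℕ) : IsLinear (C.zpad n a) := by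
  induction n with
  | zero => exact ha
  | succ n ih => exact ih.pair isLinear_zero

lemma projD_castSucc (n : ℕ) (j : Fin (n + 1)) :
    C.projD (A := A) (n + 1) j.castSucc = C.comp (C.projD n j) C.fst := by
  simp [CDCData.projD]

lemma projD_last (n : ℕ) : C.projD (A := A) (n + 1) (Fin.last (n + 1)) = C.snd := by
  simp [CDCData.projD]

lemma projD_zero_succ (n : ℕ) : C.projD (A := A) (n + 1) 0 = C.comp (C.projD n 0) C.fst :=
  projD_castSucc n 0

lemma isLinear_projD (n : ℕ) (j : Fin (n + 1)) : IsLinear (C.projD (A := A) n j) := by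
  induction n with
  | zero => exact isLinear_id
  | succ n ih =>
    induction j using Fin.lastCases with
    | last => rw [projD_last]; exact isLinear_snd
    | cast j => rw [projD_castSucc]; exact (ih j).comp isLinear_fst

lemma projD_comp_zero (n : ℕ) (j : Fin (n + 1)) :
    C.comp (C.projD n j) (0 : C.Hom Z (C.dom A n)) = 0 := by
  induction n with
  | zero => exact C.id_comp 0
  | succ n ih =>
    induction j using Fin.lastCases with
    | last => rw [projD_last]; exact snd_comp_zero
    | cast j => rw [projD_castSucc, C.comp_assoc, fst_comp_zero, ih]

lemma projD_zero_zpad (n : ℕ) (a : C.Hom Z A) : C.comp (C.projD n 0) (C.zpad n a) = a := by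
  induction n with
  | zero => exact C.id_comp a
  | succ n ih => rw [projD_zero_succ, CDCData.zpad, C.comp_assoc, C.fst_pair, ih]

lemma projD_succ_zpad (n : ℕ) (j : Fin n) (a : C.Hom Z A) :
    C.comp (C.projD n j.succ) (C.zpad n a) = 0 := by
  induction n with
  | zero => exact j.elim0
  | succ n ih =>
    induction j using Fin.lastCases with
    | last => rw [Fin.succ_last, projD_last, CDCData.zpad, C.snd_pair]
    | cast j => rw [Fin.succ_castSucc, projD_castSucc, CDCData.zpad, C.comp_assoc, C.fst_pair, ih]

lemma projD_tupleD (n : ℕ) (y : Fin (n + 1) → C.Hom Z A) (j : Fin (n + 1)) :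
    C.comp (C.projD n j) (C.tupleD n y) = y j := by
  induction n with
  | zero => rw [Fin.fin_one_eq_zero j]; exact C.id_comp (y 0)
  | succ n ih =>
    induction j using Fin.lastCases with
    | last => rw [projD_last, CDCData.tupleD, C.snd_pair]
    | cast j => rw [projD_castSucc, CDCData.tupleD, C.comp_assoc, C.fst_pair, ih]

lemma tupleD_comp (n : ℕ) (y : Fin (n + 1) → C.Hom Z A) (h : C.Hom W Z) :
    C.comp (C.tupleD n y) h = C.tupleD n (fun j => C.comp (y j) h) := by
  induction n with
  | zero => rfl
  | succ n ih => rw [CDCData.tupleD, CDCData.tupleD, pair_comp, ih]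

lemma tupleD_projD_comp (n : ℕ) (h : C.Hom Z (C.dom A n)) :
    C.tupleD n (fun j => C.comp (C.projD n j) h) = h := by
  induction n with
  | zero => exact C.id_comp h
  | succ n ih =>
    simp only [CDCData.tupleD, projD_castSucc, projD_last, C.comp_assoc, ih, C.pair_unique]

lemma tupleD_projD (n : ℕ) : C.tupleD n (C.projD (A := A) n) = C.id (C.dom A n) := by
  simpa only [C.comp_id] using tupleD_projD_comp (A := A) n (C.id _)

lemma IsLinear.tupleD (n : ℕ) {y : Fin (n + 1) → C.Hom Z A} (hy : ∀ j, IsLinear (y j)) :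
    IsLinear (C.tupleD n y) := by
  induction n with
  | zero => exact hy 0
  | succ n ih => exact (ih fun j => hy j.castSucc).pair (hy _)

end Tuples

section HigherDerivatives

variable {Z A B : C.Obj}

lemma fDeriv_succ_apply (f : C.Hom A B) (n : ℕ) (t : C.Hom Z (C.dom A n)) (a : C.Hom Z A) :
    C.comp (C.fDeriv f (n + 1)) (C.pair t a) =
      C.comp (C.D (C.fDeriv f n)) (C.pair t (C.zpad n a)) := by
  rw [CDC.fDeriv, C.comp_assoc, pair_comp, C.fst_pair, zpad_comp, C.snd_pair]

lemma isLinear_pair_fst_zpad_snd (n : ℕ) :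
    IsLinear (C.pair (C.fst (A := C.dom A n)) (C.zpad n (C.snd (A := C.dom A n) (B := A)))) :=
  isLinear_fst.pair (isLinear_snd.zpad n)

lemma D_fDeriv_succ_apply (f : C.Hom A B) (n : ℕ) (t d : C.Hom Z (C.dom A n))
    (a b : C.Hom Z A) :
    C.comp (C.D (C.fDeriv f (n + 1))) (C.pair (C.pair t a) (C.pair d b)) =
      C.comp (C.D (C.D (C.fDeriv f n)))
        (C.pair (C.pair t (C.zpad n a)) (C.pair d (C.zpad n b))) := by
  rw [CDC.fDeriv, D_comp_apply_of_isLinear _ (isLinear_pair_fst_zpad_snd n)]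
  simp only [pair_comp, C.fst_pair, C.snd_pair, zpad_comp]

lemma fDeriv_add_two_apply (f : C.Hom A B) (n : ℕ) (t : C.Hom Z (C.dom A n))
    (a b : C.Hom Z A) :
    C.comp (C.fDeriv f (n + 2)) (C.pair (C.pair t a) b) =
      C.comp (C.D (C.D (C.fDeriv f n)))
        (C.pair (C.pair t (C.zpad n a)) (C.pair (C.zpad n b) 0)) := by
  rw [fDeriv_succ_apply, CDCData.zpad, D_fDeriv_succ_apply, zpad_zero]

lemma fDeriv_swap_apply (f : C.Hom A B) (n : ℕ) (t : C.Hom Z (C.dom A n)) (a b : C.Hom Z A) :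
    C.comp (C.fDeriv f (n + 2)) (C.pair (C.pair t a) b) =
      C.comp (C.fDeriv f (n + 2)) (C.pair (C.pair t b) a) := by
  rw [fDeriv_add_two_apply, fDeriv_add_two_apply, C.D_sym]

def swapLastTwo (n : ℕ) : C.Hom (C.dom A (n + 2)) (C.dom A (n + 2)) :=
  C.pair (C.pair (C.comp C.fst C.fst) C.snd) (C.comp C.snd C.fst)

lemma swapLastTwo_pair (n : ℕ) (t : C.Hom Z (C.dom A n)) (a b : C.Hom Z A) :
    C.comp (swapLastTwo n) (C.pair (C.pair t a) b) = C.pair (C.pair t b) a := by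
  simp only [swapLastTwo, pair_comp, C.comp_assoc, C.fst_pair, C.snd_pair]

lemma isLinear_swapLastTwo (n : ℕ) : IsLinear (swapLastTwo (C := C) (A := A) n) :=
  ((isLinear_fst.comp isLinear_fst).pair isLinear_snd).pair (isLinear_snd.comp isLinear_fst)

lemma fDeriv_comp_swapLastTwo (f : C.Hom A B) (n : ℕ) :
    C.comp (C.fDeriv f (n + 2)) (swapLastTwo n) = C.fDeriv f (n + 2) :=
  pair_ext fun P b => by
    rw [← C.pair_unique P, C.comp_assoc, swapLastTwo_pair, fDeriv_swap_apply]

end HigherDerivatives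

section ListTuples

variable {Z A B : C.Obj} {τ : Type*}

/-- `tupList x0 (l.map v)`, but with a type depending on `l.length` only. -/
def tupMap (x0 : C.Hom Z A) (v : τ → C.Hom Z A) : (l : List τ) → C.Hom Z (C.dom A l.length)
  | [] => x0
  | p :: l => C.pair (tupMap x0 v l) (v p)

def fDerivAt (f : C.Hom A B) (x0 : C.Hom Z A) (v : τ → C.Hom Z A) (l : List τ) : C.Hom Z B :=
  C.comp (C.fDeriv f l.length) (tupMap x0 v l)

lemma tupMap_comp {W : C.Obj} (x0 : C.Hom Z A) (v : τ → C.Hom Z A) (l : List τ)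
    (h : C.Hom W Z) :
    C.comp (tupMap x0 v l) h = tupMap (C.comp x0 h) (fun p => C.comp (v p) h) l := by
  induction l with
  | nil => rfl
  | cons p l ih => rw [tupMap, pair_comp, ih, tupMap]

lemma tupMap_congr {x0 : C.Hom Z A} {v v' : τ → C.Hom Z A} {l : List τ}
    (hv : ∀ p ∈ l, v p = v' p) : tupMap x0 v l = tupMap x0 v' l := by
  induction l with
  | nil => rfl
  | cons p l ih =>
    rw [tupMap, tupMap, hv p List.mem_cons_self, ih fun q hq => hv q (List.mem_cons_of_mem p hq)]

lemma IsLinear.tupMap {x0 : C.Hom Z A} {v : τ → C.Hom Z A} (hx : IsLinear x0)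
    (hv : ∀ p, IsLinear (v p)) (l : List τ) : IsLinear (tupMap x0 v l) := by
  induction l with
  | nil => exact hx
  | cons p l ih => exact ih.pair (hv p)

lemma projD_zero_tupMap (x0 : C.Hom Z A) (v : τ → C.Hom Z A) (l : List τ) :
    C.comp (C.projD l.length 0) (tupMap x0 v l) = x0 := by
  induction l with
  | nil => exact C.id_comp x0
  | cons p l ih =>
    simp only [List.length_cons]
    rw [projD_zero_succ, C.comp_assoc, tupMap, C.fst_pair, ih]

theorem exists_reindex_of_perm {l l' : List τ} (h : l.Perm l') :
    ∃ P : C.Hom (C.dom A l.length) (C.dom A l'.length), IsLinear P ∧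
      (∀ {B : C.Obj} (f : C.Hom A B), C.comp (C.fDeriv f l'.length) P = C.fDeriv f l.length) ∧
      (∀ {Z : C.Obj} (a : C.Hom Z A), C.comp P (C.zpad l.length a) = C.zpad l'.length a) ∧
      (∀ {Z : C.Obj} (x0 : C.Hom Z A) (v : τ → C.Hom Z A),
        C.comp P (tupMap x0 v l) = tupMap x0 v l') := by
  induction h with
  | nil => exact ⟨C.id A, isLinear_id, fun f => C.comp_id _, fun a => C.id_comp _,
      fun x0 v => C.id_comp _⟩
  | @cons p l₁ l₂ _ ih =>
    obtain ⟨P, hP, hf, hz, ht⟩ := ih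
    refine ⟨C.pair (C.comp P C.fst) C.snd, (hP.comp isLinear_fst).pair isLinear_snd,
      fun f => ?_, fun a => ?_, fun x0 v => ?_⟩
    · refine pair_ext fun t a => ?_
      simp only [List.length_cons]
      rw [C.comp_assoc, pair_comp, C.comp_assoc, C.fst_pair, C.snd_pair,
        fDeriv_succ_apply, fDeriv_succ_apply, ← hf f, D_comp_apply_of_isLinear _ hP, hz]
    · simp only [List.length_cons]
      rw [CDCData.zpad, CDCData.zpad, pair_comp, C.comp_assoc, C.fst_pair,
        C.snd_pair, hz]
    · simp only [List.length_cons]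
      rw [tupMap, tupMap, pair_comp, C.comp_assoc, C.fst_pair, C.snd_pair, ht]
  | swap p q l =>
    refine ⟨swapLastTwo l.length, isLinear_swapLastTwo _, fun f => fDeriv_comp_swapLastTwo f _,
      fun a => ?_, fun x0 v => ?_⟩
    · simp only [List.length_cons]
      rw [CDCData.zpad, CDCData.zpad, swapLastTwo_pair]
    · rw [tupMap, tupMap, tupMap, tupMap, swapLastTwo_pair]
  | trans _ _ ih₁ ih₂ =>
    obtain ⟨P₁, hP₁, hf₁, hz₁, ht₁⟩ := ih₁
    obtain ⟨P₂, hP₂, hf₂, hz₂, ht₂⟩ := ih₂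
    refine ⟨C.comp P₂ P₁, hP₂.comp hP₁, fun f => ?_, fun a => ?_, fun x0 v => ?_⟩
    · rw [← C.comp_assoc, hf₂, hf₁]
    · rw [C.comp_assoc, hz₁, hz₂]
    · rw [C.comp_assoc, ht₁, ht₂]

theorem fDerivAt_perm (f : C.Hom A B) (x0 : C.Hom Z A) (v : τ → C.Hom Z A) {l l' : List τ}
    (h : l.Perm l') : fDerivAt f x0 v l = fDerivAt f x0 v l' := by
  obtain ⟨P, -, hf, -, ht⟩ := exists_reindex_of_perm (A := A) h
  rw [fDerivAt, fDerivAt, ← hf f, C.comp_assoc, ht]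

theorem fDerivAt_eq_zero [DecidableEq τ] (f : C.Hom A B) (x0 : C.Hom Z A) (v : τ → C.Hom Z A)
    {l : List τ} {p : τ} (hp : p ∈ l) (hv : v p = 0) : fDerivAt f x0 v l = 0 := by
  rw [fDerivAt_perm f x0 v (List.perm_cons_erase hp), fDerivAt]
  simp only [List.length_cons]
  rw [tupMap, hv, fDeriv_succ_apply, zpad_zero, D_comp_pair_zero]

variable {σ : Type*}

lemma comp_fDeriv_congr_heq (f : C.Hom A B) {n n' : ℕ} (h : n = n')
    {t : C.Hom Z (C.dom A n)} {t' : C.Hom Z (C.dom A n')} (ht : t ≍ t') :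
    C.comp (C.fDeriv f n) t = C.comp (C.fDeriv f n') t' := by
  subst h; rw [eq_of_heq ht]

lemma pair_congr_heq {n n' : ℕ} (h : n = n') {t : C.Hom Z (C.dom A n)}
    {t' : C.Hom Z (C.dom A n')} (ht : t ≍ t') (a : C.Hom Z A) : C.pair t a ≍ C.pair t' a := by
  subst h; rw [eq_of_heq ht]

lemma tupMap_map_heq (x0 : C.Hom Z A) (v : σ → C.Hom Z A) (g : τ → σ) (l : List τ) :
    tupMap x0 v (l.map g) ≍ tupMap x0 (v ∘ g) l := by
  induction l with
  | nil => rfl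
  | cons p l ih => exact pair_congr_heq (List.length_map _) ih (v (g p))

lemma fDerivAt_map (f : C.Hom A B) (x0 : C.Hom Z A) (v : σ → C.Hom Z A) (g : τ → σ)
    (l : List τ) : fDerivAt f x0 v (l.map g) = fDerivAt f x0 (v ∘ g) l :=
  comp_fDeriv_congr_heq f (List.length_map _) (tupMap_map_heq x0 v g l)

lemma comp_fDeriv_tupList (f : C.Hom A B) (x0 : C.Hom Z A) (v : τ → C.Hom Z A) (l : List τ) :
    C.comp (C.fDeriv f (l.map v).length) (C.tupList x0 (l.map v)) = fDerivAt f x0 v l := by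
  have h : ∀ L : List (C.Hom Z A), C.tupList x0 L = tupMap x0 id L := by
    intro L
    induction L with
    | nil => rfl
    | cons a L ih => rw [CDCData.tupList, ih]; rfl
  rw [h]
  exact fDerivAt_map f x0 id v l

lemma tupMap_finRange_reverse_heq (n : ℕ) (y : Fin (n + 1) → C.Hom Z A) :
    tupMap (y 0) (fun j => y j.succ) (List.finRange n).reverse ≍ C.tupleD n y := by
  induction n with
  | zero => rfl
  | succ n ih =>
    rw [List.finRange_succ_last, List.reverse_append, List.reverse_singleton,
      List.singleton_append, ← List.map_reverse, tupMap, Fin.succ_last]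
    refine pair_congr_heq (by simp) ((tupMap_map_heq _ _ _ _).trans ?_) _
    simpa only [Function.comp_def, Fin.succ_castSucc, Fin.castSucc_zero] using
      ih fun i => y i.castSucc

lemma comp_fDeriv_tupleD (f : C.Hom A B) (n : ℕ) (y : Fin (n + 1) → C.Hom Z A) :
    C.comp (C.fDeriv f n) (C.tupleD n y) =
      fDerivAt f (y 0) (fun j => y j.succ) (List.finRange n) := by
  rw [← fDerivAt_perm f _ _ (List.reverse_perm _)]
  exact (comp_fDeriv_congr_heq f (by simp) (tupMap_finRange_reverse_heq n y)).symm

end ListTuples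

section TotalDerivative

variable {Z A B : C.Obj}

variable (A) in
/-- `(t, d) ↦ (t, d₀)`. -/
def snocHead (n : ℕ) : C.Hom (C.prod (C.dom A n) (C.dom A n)) (C.dom A (n + 1)) :=
  C.pair C.fst (C.comp (C.projD n 0) C.snd)

variable (A) in
/-- `(t, d) ↦ t` with its slot `s + 1` replaced by `d_{s+1}`. -/
def replaceSlot (n : ℕ) (s : Fin n) : C.Hom (C.prod (C.dom A n) (C.dom A n)) (C.dom A n) :=
  C.tupleD n fun j =>
    if j = s.succ then C.comp (C.projD n j) C.snd else C.comp (C.projD n j) C.fst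

lemma isLinear_snocHead (n : ℕ) : IsLinear (snocHead (C := C) A n) :=
  isLinear_fst.pair ((isLinear_projD n 0).comp isLinear_snd)

lemma isLinear_replaceSlot (n : ℕ) (s : Fin n) : IsLinear (replaceSlot (C := C) A n s) :=
  IsLinear.tupleD n fun j => by
    split
    · exact (isLinear_projD n j).comp isLinear_snd
    · exact (isLinear_projD n j).comp isLinear_fst

lemma snocHead_pair (n : ℕ) (P Q : C.Hom Z (C.dom A n)) :
    C.comp (snocHead A n) (C.pair P Q) = C.pair P (C.comp (C.projD n 0) Q) := by
  rw [snocHead, pair_comp, C.fst_pair, C.comp_assoc, C.snd_pair]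

lemma snocHead_zpad (n : ℕ) (a : C.Hom Z A) :
    C.comp (snocHead A n) (C.pair (C.zpad n a) 0) = C.zpad (n + 1) a := by
  rw [snocHead_pair, projD_comp_zero]; rfl

lemma replaceSlot_zpad (n : ℕ) (s : Fin n) (a : C.Hom Z A) :
    C.comp (replaceSlot A n s) (C.pair (C.zpad n a) 0) = C.zpad n a := by
  rw [replaceSlot, tupleD_comp]
  conv_rhs => rw [← tupleD_projD_comp n (C.zpad n a)]
  congr 1
  funext j
  split_ifs with hj
  · rw [C.comp_assoc, C.snd_pair, projD_comp_zero, hj, projD_succ_zpad]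
  · rw [C.comp_assoc, C.fst_pair]

lemma replaceSlot_last_pair (n : ℕ) (t d : C.Hom Z (C.dom A n)) (a b : C.Hom Z A) :
    C.comp (replaceSlot A (n + 1) (Fin.last n)) (C.pair (C.pair t a) (C.pair d b)) =
      C.pair t b := by
  rw [replaceSlot, tupleD_comp, CDCData.tupleD, if_pos (Fin.succ_last n).symm, projD_last,
    C.comp_assoc, C.snd_pair, C.snd_pair]
  conv_rhs => rw [← tupleD_projD_comp n t]
  congr 2
  funext j
  rw [if_neg (by rw [Fin.succ_last]; exact (Fin.castSucc_lt_last j).ne), projD_castSucc,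
    C.comp_assoc, C.comp_assoc, C.fst_pair, C.fst_pair]

lemma replaceSlot_castSucc_pair (n : ℕ) (s : Fin n) (t d : C.Hom Z (C.dom A n))
    (a b : C.Hom Z A) :
    C.comp (replaceSlot A (n + 1) s.castSucc) (C.pair (C.pair t a) (C.pair d b)) =
      C.pair (C.comp (replaceSlot A n s) (C.pair t d)) a := by
  rw [replaceSlot, replaceSlot, tupleD_comp, tupleD_comp, CDCData.tupleD,
    if_neg (by rw [Fin.succ_castSucc]; exact (Fin.castSucc_lt_last _).ne'), projD_last,
    C.comp_assoc, C.fst_pair, C.snd_pair]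
  congr 2
  funext j
  simp only [Fin.succ_castSucc, Fin.castSucc_inj, projD_castSucc]
  split_ifs <;> simp only [C.comp_assoc, C.fst_pair, C.snd_pair]

/-- The old derivative slots contribute one term each because `f⁽ⁿ⁾` is linear in them (axiom
`D_lin`); the step `n → n + 1` moves the new direction past the old ones with `D_sym`. -/
theorem D_fDeriv (f : C.Hom A B) (n : ℕ) :
    C.D (C.fDeriv f n) = C.comp (C.fDeriv f (n + 1)) (snocHead A n) +
      ∑ s : Fin n, C.comp (C.fDeriv f n) (replaceSlot A n s) := by
  induction n with
  | zero =>
    have h : snocHead (C := C) A 0 = C.id _ := by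
      rw [snocHead, show C.projD (A := A) 0 0 = C.id A from rfl, C.id_comp, pair_fst_snd]
    rw [h, C.comp_id, Fin.sum_univ_zero, add_zero]
    show C.D f = C.comp (C.D f) (C.pair C.fst C.snd)
    rw [pair_fst_snd, C.comp_id]
  | succ n ih =>
    refine pair_pair_ext fun {Z} t a d b => ?_
    have hD : ∀ P : C.Hom Z (C.dom A n),
        C.comp (C.D (C.D (C.fDeriv f n))) (C.pair (C.pair t P) (C.pair (C.zpad n a) 0)) =
          C.comp (C.fDeriv f (n + 2)) (C.pair (C.pair t (C.comp (C.projD n 0) P)) a) +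
            ∑ s : Fin n, C.comp (C.fDeriv f (n + 1))
              (C.pair (C.comp (replaceSlot A n s) (C.pair t P)) a) := by
      intro P
      rw [ih, C.D_add, D_sum, C.add_comp, sum_comp,
        D_comp_apply_of_isLinear _ (isLinear_snocHead n), snocHead_pair, snocHead_zpad,
        ← fDeriv_succ_apply]
      congr 1
      refine Finset.sum_congr rfl fun s _ => ?_
      rw [D_comp_apply_of_isLinear _ (isLinear_replaceSlot n s), replaceSlot_zpad,
        ← fDeriv_succ_apply]
    have hsplit : C.pair d (C.zpad n b) = C.pair d 0 + C.pair 0 (C.zpad n b) := by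
      rw [← pair_add, add_zero, zero_add]
    rw [D_fDeriv_succ_apply, hsplit, C.D_arg_add, C.D_sym, C.D_lin, ← fDeriv_succ_apply, hD,
      C.add_comp, sum_comp, Fin.sum_univ_castSucc, C.comp_assoc, snocHead_pair, projD_zero_succ,
      C.comp_assoc, C.fst_pair, fDeriv_swap_apply, C.comp_assoc, replaceSlot_last_pair, add_assoc]
    congr 2
    refine Finset.sum_congr rfl fun s _ => ?_
    rw [C.comp_assoc, replaceSlot_castSucc_pair]

variable {τ : Type*} [DecidableEq τ]

lemma sum_replaceSlot_tupMap {M : Type*} [AddCommMonoid M] (x0 d0 : C.Hom Z A)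
    (v w : τ → C.Hom Z A) {l : List τ} (hl : l.Nodup) (G : C.Hom Z (C.dom A l.length) → M) :
    ∑ s : Fin l.length,
        G (C.comp (replaceSlot A l.length s) (C.pair (tupMap x0 v l) (tupMap d0 w l))) =
      (l.map fun p => G (tupMap x0 (Function.update v p (w p)) l)).sum := by
  induction l with
  | nil => simp
  | cons p l ih =>
    obtain ⟨hp, hl⟩ := List.nodup_cons.mp hl
    have hv : tupMap x0 (Function.update v p (w p)) l = tupMap x0 v l :=
      tupMap_congr fun q hq => Function.update_of_ne (ne_of_mem_of_not_mem hq hp) _ _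
    have hq : ∀ q ∈ l, Function.update v q (w q) p = v p :=
      fun q hq => Function.update_of_ne (ne_of_mem_of_not_mem hq hp).symm _ _
    simp only [List.length_cons] at G ⊢
    rw [Fin.sum_univ_castSucc]
    simp only [tupMap, replaceSlot_castSucc_pair, replaceSlot_last_pair]
    rw [ih hl fun T => G (C.pair T (v p)), List.map_cons, List.sum_cons, add_comm, hv,
      Function.update_self]
    congr 1
    exact congrArg List.sum (List.map_congr_left fun q hq' => by rw [hq q hq'])

theorem D_fDeriv_tupMap (f : C.Hom A B) (x0 d0 : C.Hom Z A) (v w : τ → C.Hom Z A)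
    {l : List τ} (hl : l.Nodup) :
    C.comp (C.D (C.fDeriv f l.length)) (C.pair (tupMap x0 v l) (tupMap d0 w l)) =
      C.comp (C.fDeriv f (l.length + 1)) (C.pair (tupMap x0 v l) d0) +
        (l.map fun p => fDerivAt f x0 (Function.update v p (w p)) l).sum := by
  rw [D_fDeriv, C.add_comp, sum_comp, C.comp_assoc, snocHead_pair, projD_zero_tupMap]
  congr 1
  simp only [C.comp_assoc]
  exact sum_replaceSlot_tupMap x0 d0 v w hl (C.comp (C.fDeriv f l.length))

end TotalDerivative

end CDC

lemma List.sum_filterMap_eq_sum_map_getD {α M : Type*} [AddCommMonoid M] (L : List α)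
    (f : α → Option M) : (L.filterMap f).sum = (L.map fun a => (f a).getD 0).sum := by
  induction L with
  | nil => rfl
  | cons a L ih => cases h : f a <;> simp [h, ih]

section Arrangement

variable {m n : ℕ}

def IsArranged (θ : Fin m → Option (Fin n)) (p : Fin (m + 1) × Fin (n + 1)) : Prop :=
  Fin.cases (Fin.cases False (fun j => ∀ i, θ i ≠ some j) p.2)
    (fun i => Fin.cases (θ i = none) (fun j => θ i = some j) p.2) p.1

@[simp] lemma isArranged_zero_zero (θ : Fin m → Option (Fin n)) : ¬IsArranged θ (0, 0) :=
  id

@[simp] lemma isArranged_zero_succ (θ : Fin m → Option (Fin n)) (j : Fin n) :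
    IsArranged θ (0, j.succ) ↔ ∀ i, θ i ≠ some j := Iff.rfl

@[simp] lemma isArranged_succ_zero (θ : Fin m → Option (Fin n)) (i : Fin m) :
    IsArranged θ (i.succ, 0) ↔ θ i = none := Iff.rfl

@[simp] lemma isArranged_succ_succ (θ : Fin m → Option (Fin n)) (i : Fin m) (j : Fin n) :
    IsArranged θ (i.succ, j.succ) ↔ θ i = some j := Iff.rfl

lemma mem_arrangeTail {θ : Fin m → Option (Fin n)} {p : Fin (m + 1) × Fin (n + 1)} :
    p ∈ arrangeTail m n θ ↔ IsArranged θ p := by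
  obtain ⟨i, j⟩ := p
  cases i using Fin.cases <;> cases j using Fin.cases <;>
    simp [arrangeTail, (Fin.succ_ne_zero _).symm]

lemma nodup_arrangeTail (θ : Fin m → Option (Fin n)) : (arrangeTail m n θ).Nodup := by
  simp only [arrangeTail, List.nodup_append]
  refine ⟨⟨?_, ?_, ?_⟩, ?_, ?_⟩
  · refine (List.nodup_finRange m).filterMap fun a a' b hb hb' => ?_
    simp_all
    grind
  · refine (List.nodup_finRange m).filterMap fun a a' b hb hb' => ?_
    simp_all
    grind
  · simp
    grind
  · refine (List.nodup_finRange n).filterMap fun a a' b hb hb' => ?_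
    simp_all
    grind
  · simp
    grind

lemma arrangeTail_zero (θ : Fin 0 → Option (Fin n)) :
    arrangeTail 0 n θ = (List.finRange n).map fun j => (0, j.succ) := by
  simp [arrangeTail]

lemma isArranged_snoc_last (θ : Fin m → Option (Fin n)) (o : Option (Fin n)) (j : Fin (n + 1)) :
    IsArranged (Fin.snoc θ o : Fin (m + 1) → Option (Fin n)) (Fin.last (m + 1), j) ↔
      j = o.elim 0 Fin.succ := by
  show IsArranged _ ((Fin.last m).succ, j) ↔ _
  cases j using Fin.cases <;> cases o <;> simp [-Fin.succ_last, eq_comm]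

lemma isArranged_snoc_castSucc (θ : Fin m → Option (Fin n)) (o : Option (Fin n))
    (i : Fin (m + 1)) (j : Fin (n + 1)) :
    IsArranged (Fin.snoc θ o : Fin (m + 1) → Option (Fin n)) (i.castSucc, j) ↔
      IsArranged θ (i, j) ∧ (i, j) ∉ o.map fun j' => (0, j'.succ) := by
  cases i using Fin.cases with
  | zero =>
    cases j using Fin.cases with
    | zero => simp
    | succ j => cases o <;> simp [Fin.forall_fin_succ', eq_comm]
  | succ i =>
    rw [← Fin.succ_castSucc]
    cases j using Fin.cases <;> cases o <;> simp [(Fin.succ_ne_zero _).symm]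

lemma perm_arrangeTail_snoc_none (θ : Fin m → Option (Fin n)) :
    ((Fin.last (m + 1), 0) :: (arrangeTail m n θ).map (Prod.map Fin.castSucc id)).Perm
      (arrangeTail (m + 1) n (Fin.snoc θ none)) := by
  have hinj : Function.Injective (Prod.map Fin.castSucc id : Fin (m + 1) × Fin (n + 1) → _) :=
    (Fin.castSucc_injective _).prodMap Function.injective_id
  rw [List.perm_ext_iff_of_nodup _ (nodup_arrangeTail _)]
  · rintro ⟨i, j⟩
    induction i using Fin.lastCases with
    | last => simp [mem_arrangeTail, isArranged_snoc_last, (Fin.castSucc_lt_last _).ne]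
    | cast i =>
      rw [mem_arrangeTail, isArranged_snoc_castSucc]
      simp [mem_arrangeTail, (Fin.castSucc_lt_last _).ne]
  · exact List.nodup_cons.2
      ⟨by simp [(Fin.castSucc_lt_last _).ne], (nodup_arrangeTail θ).map hinj⟩

lemma perm_arrangeTail_snoc_some (θ : Fin m → Option (Fin n)) {j₀ : Fin n}
    (hj₀ : ∀ i, θ i ≠ some j₀) :
    ((arrangeTail m n θ).map (Function.update (Prod.map Fin.castSucc id) (0, j₀.succ)
        (Fin.last (m + 1), j₀.succ))).Perm
      (arrangeTail (m + 1) n (Fin.snoc θ (some j₀))) := by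
  set g := Function.update (Prod.map Fin.castSucc id) ((0 : Fin (m + 1)), j₀.succ)
    (Fin.last (m + 1), j₀.succ)
  have hg_last : ∀ q j, g q = (Fin.last (m + 1), j) ↔ q = (0, j₀.succ) ∧ j = j₀.succ := by
    intro q j
    by_cases hq : q = (0, j₀.succ) <;>
      simp [g, hq, Prod.ext_iff, (Fin.castSucc_lt_last _).ne, eq_comm]
  have hg_castSucc : ∀ q (i : Fin (m + 1)) j,
      g q = (i.castSucc, j) ↔ q ≠ (0, j₀.succ) ∧ q = (i, j) := by
    intro q i j
    by_cases hq : q = (0, j₀.succ) <;> simp [g, hq, Prod.ext_iff, (Fin.castSucc_lt_last _).ne']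
  rw [List.perm_ext_iff_of_nodup _ (nodup_arrangeTail _)]
  · rintro ⟨i, j⟩
    induction i using Fin.lastCases with
    | last => simpa [mem_arrangeTail, isArranged_snoc_last, hg_last] using fun _ => hj₀
    | cast i =>
      rw [mem_arrangeTail, isArranged_snoc_castSucc]
      simp [mem_arrangeTail, hg_castSucc]
      grind
  · refine (nodup_arrangeTail θ).map fun a b h => ?_
    by_cases ha : a = (0, j₀.succ) <;> by_cases hb : b = (0, j₀.succ) <;>
      simp_all [g, Prod.ext_iff, (Fin.castSucc_lt_last _).ne, (Fin.castSucc_lt_last _).ne']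

lemma sum_map_arrangeTail {M : Type*} [AddCommMonoid M] (θ : Fin m → Option (Fin n))
    (G : Fin (m + 1) × Fin (n + 1) → M)
    (hG : ∀ i j, (Fin.succ i, j) ∈ arrangeTail m n θ → G (i.succ, j) = 0) :
    ((arrangeTail m n θ).map G).sum =
      ∑ j ∈ Finset.univ.filter (fun j : Fin n => ∀ i, θ i ≠ some j), G (0, j.succ) := by
  let G' : Fin (m + 1) × Fin (n + 1) → M := fun p => Fin.cases (G (0, p.2)) (fun _ => 0) p.1
  rw [List.map_congr_left (g := G') fun p hp => ?_]
  swap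
  · obtain ⟨i, j⟩ := p
    cases i using Fin.cases
    · rfl
    · exact hG _ _ hp
  change _ = ∑ j ∈ _, G' (0, Fin.succ j)
  have hG' : ∀ i j, G' (Fin.succ i, j) = 0 := fun _ _ => rfl
  have h0 : ∀ o : Option (Fin n), (o.map fun _ => (0 : M)).getD 0 = 0 := by
    intro o; cases o <;> rfl
  simp [arrangeTail, List.map_filterMap, hG', Finset.sum_filter,
    List.sum_filterMap_eq_sum_map_getD, Function.comp_def, h0,
    apply_ite (fun o : Option M => o.getD 0), Fin.sum_univ_def]

end Arrangement

section PartialInjections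

variable {m n : ℕ}

lemma snoc_mem_partialInjs_iff {θ : Fin m → Option (Fin n)} {o : Option (Fin n)} :
    (Fin.snoc θ o : Fin (m + 1) → Option (Fin n)) ∈ partialInjs (m + 1) n ↔
      θ ∈ partialInjs m n ∧ ∀ j ∈ o, ∀ i, θ i ≠ some j := by
  simp only [partialInjs, Finset.mem_filter, Finset.mem_univ, true_and, Fin.forall_fin_succ',
    Fin.snoc_castSucc, Fin.snoc_last, Option.mem_def, Fin.castSucc_inj,
    (Fin.castSucc_lt_last _).ne, (Fin.castSucc_lt_last _).ne']
  grind

lemma sum_partialInjs_succ {M : Type*} [AddCommMonoid M]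
    (F : (Fin (m + 1) → Option (Fin n)) → M) :
    ∑ θ' ∈ partialInjs (m + 1) n, F θ' =
      ∑ θ ∈ partialInjs m n, (F (Fin.snoc θ none) +
        ∑ j ∈ Finset.univ.filter (fun j : Fin n => ∀ i, θ i ≠ some j),
          F (Fin.snoc θ (some j))) := by
  rw [← Finset.sum_congr rfl fun θ _ => Finset.sum_insertNone (fun o => F (Fin.snoc θ o)) _,
    Finset.sum_sigma']
  refine Finset.sum_nbij' (fun θ' => ⟨Fin.init θ', θ' (Fin.last m)⟩)
    (fun p => Fin.snoc p.1 p.2) ?_ ?_ ?_ ?_ ?_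
  · intro θ' hθ'
    rw [← Fin.snoc_init_self θ', snoc_mem_partialInjs_iff] at hθ'
    simpa [Finset.mem_insertNone] using hθ'
  · rintro ⟨θ, o⟩ h
    simpa [snoc_mem_partialInjs_iff, Finset.mem_insertNone] using h
  · intro θ' _; exact Fin.snoc_init_self θ'
  · rintro ⟨θ, o⟩ _; simp [Fin.init_snoc]
  · intro θ' _; rw [Fin.snoc_init_self]

end PartialInjections

namespace CDC

variable {C : CDC k}

section Main

variable {X A B : C.Obj}

lemma comp_fDeriv_tupMap_arrangeTail_snoc_none {m n : ℕ} (f : C.Hom A B)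
    (x : Fin (m + 2) → Fin (n + 1) → C.Hom X A) (θ : Fin m → Option (Fin n)) :
    C.comp (C.fDeriv f ((arrangeTail m n θ).length + 1))
        (C.pair (tupMap (x 0 0) (fun p => x p.1.castSucc p.2) (arrangeTail m n θ))
          (x (Fin.last (m + 1)) 0)) =
      fDerivAt f (x 0 0) (Function.uncurry x) (arrangeTail (m + 1) n (Fin.snoc θ none)) := by
  rw [← fDerivAt_perm f _ _ (perm_arrangeTail_snoc_none θ)]
  exact comp_fDeriv_congr_heq f (by simp) (pair_congr_heq (List.length_map _).symm
    (tupMap_map_heq (x 0 0) (Function.uncurry x) (Prod.map Fin.castSucc id) _).symm _)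

lemma sum_fDerivAt_update_arrangeTail {m n : ℕ} (f : C.Hom A B)
    (x : Fin (m + 2) → Fin (n + 1) → C.Hom X A) (θ : Fin m → Option (Fin n))
    (w : Fin (m + 1) × Fin (n + 1) → C.Hom X A) (hw₀ : ∀ j, w (0, j) = x (Fin.last (m + 1)) j)
    (hw : ∀ i j, w (Fin.succ i, j) = 0) :
    ((arrangeTail m n θ).map fun p => fDerivAt f (x 0 0)
        (Function.update (fun q => x q.1.castSucc q.2) p (w p)) (arrangeTail m n θ)).sum =
      ∑ j ∈ Finset.univ.filter (fun j : Fin n => ∀ i, θ i ≠ some j),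
        fDerivAt f (x 0 0) (Function.uncurry x) (arrangeTail (m + 1) n (Fin.snoc θ (some j))) := by
  rw [sum_map_arrangeTail θ _ fun i j hp =>
    fDerivAt_eq_zero f _ _ hp (by rw [Function.update_self, hw])]
  refine Finset.sum_congr rfl fun j hj => ?_
  rw [← fDerivAt_perm f _ _ (perm_arrangeTail_snoc_some θ (Finset.mem_filter.mp hj).2),
    fDerivAt_map, Function.comp_update, hw₀]
  rfl

lemma fDeriv_fDeriv_zero_tupleD (f : C.Hom A B) (n : ℕ) (x : Fin 1 → Fin (n + 1) → C.Hom X A) :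
    C.comp (C.fDeriv (C.fDeriv f n) 0) (C.tupleD 0 fun i => C.tupleD n (x i)) =
      ∑ θ ∈ partialInjs 0 n, fDerivAt f (x 0 0) (Function.uncurry x) (arrangeTail 0 n θ) := by
  have huniv : partialInjs 0 n = Finset.univ := Finset.filter_true_of_mem fun θ _ i => i.elim0
  rw [huniv, Fintype.sum_unique, arrangeTail_zero, fDerivAt_map]
  exact comp_fDeriv_tupleD f n (x 0)

lemma fDeriv_fDeriv_succ_tupleD (f : C.Hom A B) (m n : ℕ)
    (ih : ∀ {Y : C.Obj} (y : Fin (m + 1) → Fin (n + 1) → C.Hom Y A),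
      C.comp (C.fDeriv (C.fDeriv f n) m) (C.tupleD m fun i => C.tupleD n (y i)) =
        ∑ θ ∈ partialInjs m n, fDerivAt f (y 0 0) (Function.uncurry y) (arrangeTail m n θ))
    (x : Fin (m + 2) → Fin (n + 1) → C.Hom X A) :
    C.comp (C.fDeriv (C.fDeriv f n) (m + 1)) (C.tupleD (m + 1) fun i => C.tupleD n (x i)) =
      ∑ θ ∈ partialInjs (m + 1) n,
        fDerivAt f (x 0 0) (Function.uncurry x) (arrangeTail (m + 1) n θ) := by
  set π : Fin (m + 1) → Fin (n + 1) → C.Hom (C.dom (C.dom A n) m) A :=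
    fun i j => C.comp (C.projD n j) (C.projD m i)
  have hπ : ∀ i j, IsLinear (π i j) := fun i j => (isLinear_projD n j).comp (isLinear_projD m i)
  have hgeneric : C.fDeriv (C.fDeriv f n) m =
      ∑ θ ∈ partialInjs m n, fDerivAt f (π 0 0) (Function.uncurry π) (arrangeTail m n θ) := by
    have hid : (C.tupleD m fun i => C.tupleD n (π i)) = C.id _ := by
      simp only [π, tupleD_projD_comp, tupleD_projD]
    simpa only [hid, C.comp_id] using ih π
  set P := C.tupleD m fun i => C.tupleD n (x i.castSucc)
  set Q := C.zpad m (C.tupleD n (x (Fin.last (m + 1))))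
  have hP : ∀ i j, C.comp (π i j) P = x i.castSucc j := fun i j => by
    simp only [π, P, C.comp_assoc, projD_tupleD]
  have hQ₀ : ∀ j, C.comp (π 0 j) Q = x (Fin.last (m + 1)) j := fun j => by
    simp only [π, Q, C.comp_assoc, projD_zero_zpad, projD_tupleD]
  have hQ : ∀ i j, C.comp (π (Fin.succ i) j) Q = 0 := fun i j => by
    simp only [π, Q, C.comp_assoc, projD_succ_zpad, projD_comp_zero]
  change C.comp _ (C.pair P (C.tupleD n (x (Fin.last (m + 1))))) = _
  rw [fDeriv_succ_apply, hgeneric, D_sum, sum_comp, sum_partialInjs_succ]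
  refine Finset.sum_congr rfl fun θ _ => ?_
  rw [fDerivAt, D_comp_apply_of_isLinear _
      (IsLinear.tupMap (v := Function.uncurry π) (hπ 0 0) (fun p => hπ p.1 p.2) _),
    tupMap_comp, tupMap_comp, D_fDeriv_tupMap _ _ _ _ _ (nodup_arrangeTail θ)]
  simp only [Function.uncurry_def, hP, Fin.castSucc_zero]
  exact congrArg₂ (· + ·) (by rw [hQ₀]; exact comp_fDeriv_tupMap_arrangeTail_snoc_none f x θ)
    (sum_fDerivAt_update_arrangeTail f x θ _ hQ₀ hQ)

theorem fDeriv_fDeriv_tupleD (f : C.Hom A B) (m n : ℕ)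
    (x : Fin (m + 1) → Fin (n + 1) → C.Hom X A) :
    C.comp (C.fDeriv (C.fDeriv f n) m) (C.tupleD m fun i => C.tupleD n (x i)) =
      ∑ θ ∈ partialInjs m n, fDerivAt f (x 0 0) (Function.uncurry x) (arrangeTail m n θ) := by
  induction m generalizing X with
  | zero => exact fDeriv_fDeriv_zero_tupleD f n x
  | succ m ih => exact fDeriv_fDeriv_succ_tupleD f m n ih x

end Main

end CDC

theorem statement10 {k : Type u} [CommSemiring k] (C : CDC k)
    {A B : C.Obj} (f : C.Hom A B) (m n : ℕ) (X : C.Obj)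
    (x : Fin (m + 1) → Fin (n + 1) → C.Hom X A) :
    C.comp (C.fDeriv (C.fDeriv f n) m)
        (C.toCDCData.tupleD m (fun i => C.toCDCData.tupleD n (x i))) =
      ∑ θ ∈ partialInjs m n,
        C.comp
          (C.fDeriv f ((arrangeTail m n θ).map (fun p => x p.1 p.2)).length)
          (C.toCDCData.tupList (x 0 0)
            ((arrangeTail m n θ).map (fun p => x p.1 p.2))) := by
  rw [CDC.fDeriv_fDeriv_tupleD]
  exact Finset.sum_congr rfl fun θ _ => (CDC.comp_fDeriv_tupList f _ _ _).symm
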